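/- arXiv:1308.2720 — 11 statements merged into one kernel-verified Lean document; each statement's English description precedes it below -/
import Mathlib

section
/- The double integral over the unit square of 1/(1-xy) equals ζ(2), i.e. ∫₀¹∫₀¹ 1/(1-xy) dx dy = ζ(2) = π²/6. -/
/-!
Expand `1 / (1 - x y) = ∑ (x y)ⁿ` and integrate term by term, first in `y`, then in `x`:
since `∫₀¹ tⁿ dt = 1 / (n + 1)`, the double integral is `∑ 1 / (n + 1)² = ζ(2)`. Both
interchanges are justified by the summability of the `L¹` norms of the terms; the line `x = 1`,
where the inner series diverges at `y = 1`, is a null set.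
-/

open Real MeasureTheory

lemma integral_mul_pow_unitInterval (c : ℝ) (n : ℕ) :
    ∫ t in (0:ℝ)..1, c * t ^ n = c / (n + 1) := by
  simp [integral_pow, div_eq_mul_inv]

lemma integral_tsum_mul_pow {c : ℕ → ℝ} (hc : Summable fun n => |c n| / (n + 1)) :
    ∫ t in (0:ℝ)..1, ∑' n, c n * t ^ n = ∑' n, c n / (n + 1) := by
  have hnorm (n : ℕ) : ∫ t in Set.Ioc (0:ℝ) 1, ‖c n * t ^ n‖ = |c n| / (n + 1) := by
    rw [← integral_mul_pow_unitInterval, intervalIntegral.integral_of_le zero_le_one]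
    refine setIntegral_congr_fun measurableSet_Ioc fun t ht => ?_
    rw [norm_mul, norm_pow, norm_of_nonneg ht.1.le, norm_eq_abs]
  rw [intervalIntegral.integral_of_le zero_le_one,
    ← integral_tsum_of_summable_integral_norm
      (fun n => (by fun_prop : Continuous fun t : ℝ => c n * t ^ n).integrableOn_Ioc)
      (by simpa only [hnorm] using hc)]
  refine tsum_congr fun n => ?_
  rw [← intervalIntegral.integral_of_le zero_le_one, integral_mul_pow_unitInterval]

lemma one_div_one_sub_mul_eq_tsum {x y : ℝ} (h : |x * y| < 1) :
    1 / (1 - x * y) = ∑' n, x ^ n * y ^ n := by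
  simp_rw [← mul_pow, tsum_geometric_of_abs_lt_one h, one_div]

lemma integral_one_div_one_sub_mul {x : ℝ} (hx : |x| < 1) :
    ∫ y in (0:ℝ)..1, 1 / (1 - x * y) = ∑' n : ℕ, x ^ n / (n + 1) := by
  have hsum : Summable fun n : ℕ => |x ^ n| / (n + 1) := by
    refine (summable_geometric_of_lt_one (abs_nonneg x) hx).of_nonneg_of_le
      (fun n => by positivity) fun n => ?_
    rw [abs_pow]
    exact div_le_self (by positivity) (by linarith [n.cast_nonneg (α := ℝ)])
  rw [← integral_tsum_mul_pow hsum]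
  refine intervalIntegral.integral_congr fun y hy => one_div_one_sub_mul_eq_tsum ?_
  rw [Set.uIcc_of_le zero_le_one] at hy
  rw [abs_mul]
  calc |x| * |y| ≤ |x| * 1 := by gcongr; exact abs_le.mpr ⟨by linarith [hy.1], hy.2⟩
    _ < 1 := by linarith

lemma hasSum_one_div_succ_sq : HasSum (fun n : ℕ => 1 / ((n : ℝ) + 1) ^ 2) (π ^ 2 / 6) := by
  simpa using (hasSum_nat_add_iff' 1).mpr hasSum_zeta_two

theorem beukers_integral_zeta_two :
    (∫ x in (0:ℝ)..1, ∫ y in (0:ℝ)..1, 1 / (1 - x * y)) = π ^ 2 / 6 := by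
  have hinner : ∀ᵐ x : ℝ, x ∈ Set.uIoc 0 1 →
      ∫ y in (0:ℝ)..1, 1 / (1 - x * y) = ∑' n : ℕ, 1 / ((n : ℝ) + 1) * x ^ n := by
    filter_upwards [measure_eq_zero_iff_ae_notMem.mp (volume_singleton (a := (1:ℝ)))]
      with x hx1 hx
    rw [Set.uIoc_of_le zero_le_one] at hx
    rw [integral_one_div_one_sub_mul (abs_lt.mpr ⟨by linarith [hx.1], lt_of_le_of_ne hx.2 hx1⟩)]
    exact tsum_congr fun n => by ring
  have hcoeff (n : ℕ) : |1 / ((n : ℝ) + 1)| / (n + 1) = 1 / ((n : ℝ) + 1) ^ 2 := by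
    rw [abs_of_pos (by positivity), div_div, ← sq]
  rw [intervalIntegral.integral_congr_ae hinner,
    integral_tsum_mul_pow (by simpa only [hcoeff] using hasSum_one_div_succ_sq.summable)]
  simpa only [div_div, ← sq] using hasSum_one_div_succ_sq.tsum_eq
end

section
/- For every positive integer r, ∫₀¹∫₀¹ xʳyʳ/(1-xy) dx dy = ζ(2) - ∑_{m=1}^{r} 1/m². -/
/-!
For `0 < x, y < 1` expand `(xy)ʳ / (1 - xy) = ∑ₙ (xy)ⁿ⁺ʳ` and integrate term by term, first in
`y` and then in `x`: since all terms are nonnegative this is legitimate, and each pass divides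
the `n`-th term by `n + r + 1`. The double integral is therefore `∑ₙ 1 / (n + r + 1)²`, the tail
of the series for `ζ(2)` after its first `r` terms.
-/

open MeasureTheory Set

lemma tsum_pow_add_of_lt_one {t : ℝ} (h₀ : 0 ≤ t) (h₁ : t < 1) (r : ℕ) :
    ∑' n : ℕ, t ^ (n + r) = t ^ r / (1 - t) := by
  simp_rw [pow_add]
  rw [tsum_mul_right, tsum_geometric_of_lt_one h₀ h₁, div_eq_mul_inv, mul_comm]

lemma Summable.tsum_nat_add_succ {G : Type*} [AddCommGroup G] [TopologicalSpace G]
    [IsTopologicalAddGroup G] [T2Space G] {f : ℕ → G} (hf : Summable fun n => f (n + 1))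
    (r : ℕ) :
    ∑' n, f (n + r + 1) = ∑' n, f (n + 1) - ∑ m ∈ Finset.Icc 1 r, f m := by
  rw [← hf.sum_add_tsum_nat_add r, Finset.range_eq_Ico, Finset.sum_Ico_add' f 0 r 1, zero_add,
    Finset.Ico_add_one_right_eq_Icc, add_sub_cancel_left]

lemma integral_zero_one_mul_pow (c : ℝ) (k : ℕ) :
    ∫ x in (0 : ℝ)..1, c * x ^ k = c / (k + 1) := by
  simp [integral_pow, div_eq_mul_inv]

lemma integral_zero_one_tsum_mul_pow {a : ℕ → ℝ} (ha : ∀ n, 0 ≤ a n) (k : ℕ → ℕ)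
    (hsum : Summable fun n => a n / (k n + 1)) :
    ∫ x in (0 : ℝ)..1, ∑' n, a n * x ^ k n = ∑' n, a n / (k n + 1) := by
  have hterm (n : ℕ) : ∫ x in Ioc (0 : ℝ) 1, a n * x ^ k n = a n / (k n + 1) := by
    rw [← intervalIntegral.integral_of_le zero_le_one, integral_zero_one_mul_pow]
  have hnorm (n : ℕ) : ∫ x in Ioc (0 : ℝ) 1, ‖a n * x ^ k n‖ = a n / (k n + 1) := by
    rw [← hterm n]
    refine setIntegral_congr_fun measurableSet_Ioc fun x hx => ?_
    exact Real.norm_of_nonneg (mul_nonneg (ha n) (pow_nonneg hx.1.le _))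
  rw [intervalIntegral.integral_of_le zero_le_one,
    ← integral_tsum_of_summable_integral_norm (F := fun n x => a n * x ^ k n)
      (fun n => (by fun_prop : Continuous fun x : ℝ => a n * x ^ k n).integrableOn_Ioc)
      (by simpa only [hnorm] using hsum)]
  exact tsum_congr hterm

lemma integral_pow_mul_pow_div_one_sub_mul (r : ℕ) {x : ℝ} (hx : x ∈ Ioo (0 : ℝ) 1) :
    ∫ y in (0 : ℝ)..1, x ^ r * y ^ r / (1 - x * y) =
      ∑' n : ℕ, x ^ (n + r) / ((n + r : ℕ) + 1) := by
  have hgeom : EqOn (fun y => x ^ r * y ^ r / (1 - x * y))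
      (fun y => ∑' n : ℕ, x ^ (n + r) * y ^ (n + r)) (Ioo 0 1) := by
    intro y hy
    have hxy : x * y < 1 := by nlinarith [hx.1, hx.2, hy.1, hy.2]
    simp only [← mul_pow, ← tsum_pow_add_of_lt_one (mul_nonneg hx.1.le hy.1.le) hxy]
  rw [intervalIntegral.integral_congr_Ioo_of_le zero_le_one hgeom]
  refine integral_zero_one_tsum_mul_pow (fun n => pow_nonneg hx.1.le _) (· + r) ?_
  have hgeom_summable : Summable fun n => x ^ (n + r) :=
    (summable_nat_add_iff r).mpr (summable_geometric_of_lt_one hx.1.le hx.2)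
  refine hgeom_summable.of_nonneg_of_le (fun n => by have := hx.1; positivity) fun n => ?_
  exact div_le_self (pow_nonneg hx.1.le _) (le_add_of_nonneg_left (Nat.cast_nonneg _))

theorem beukers_Irr_general (r : ℕ) :
    (∫ x in (0:ℝ)..1, ∫ y in (0:ℝ)..1, x ^ r * y ^ r / (1 - x * y)) =
      (∑' n : ℕ, 1 / ((n : ℝ) + 1) ^ 2) - ∑ m ∈ Finset.Icc 1 r, 1 / (m : ℝ) ^ 2 := by
  have hζ : Summable fun n : ℕ => 1 / ((n + 1 : ℕ) : ℝ) ^ 2 :=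
    (summable_nat_add_iff 1).mpr (Real.summable_one_div_nat_pow.mpr one_lt_two)
  have hsq (n : ℕ) :
      1 / ((n + r : ℕ) + 1 : ℝ) / ((n + r : ℕ) + 1) = 1 / ((n + r + 1 : ℕ) : ℝ) ^ 2 := by
    rw [div_div, ← sq, Nat.cast_add_one]
  have hinner : EqOn (fun x => ∫ y in (0 : ℝ)..1, x ^ r * y ^ r / (1 - x * y))
      (fun x => ∑' n : ℕ, 1 / ((n + r : ℕ) + 1 : ℝ) * x ^ (n + r)) (Ioo 0 1) := fun x hx => by
    simp only [integral_pow_mul_pow_div_one_sub_mul r hx, one_div_mul_eq_div]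
  have htail := ((summable_nat_add_iff r).mpr hζ).congr fun n => (hsq n).symm
  rw [intervalIntegral.integral_congr_Ioo_of_le zero_le_one hinner,
    integral_zero_one_tsum_mul_pow (fun n => by positivity) (· + r) htail, tsum_congr hsq,
    hζ.tsum_nat_add_succ (f := fun m : ℕ => 1 / (m : ℝ) ^ 2) r]
  simp only [Nat.cast_add_one]

theorem beukers_Irr (r : ℕ) (hr : 0 < r) :
    (∫ x in (0:ℝ)..1, ∫ y in (0:ℝ)..1, x ^ r * y ^ r / (1 - x * y)) =
      (∑' n : ℕ, 1 / ((n : ℝ) + 1) ^ 2) - ∑ m ∈ Finset.Icc 1 r, 1 / (m : ℝ) ^ 2 :=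
  beukers_Irr_general r
end

section
/- For nonnegative integers r, s with r ≠ s, ∫₀¹∫₀¹ xʳyˢ/(1-xy) dx dy = (H_r - H_s)/(r - s), where H_n = ∑_{k=1}^{n} 1/k is the n-th harmonic number (H_0 = 0). -/
/-!
Expanding `1 / (1 - x y)` as a geometric series and integrating term by term (all terms are
nonnegative) turns the integral into `∑ₙ 1 / ((r + n + 1) (s + n + 1))`. For `s < r` the partial
fraction `1 / ((r + n + 1) (s + n + 1)) = (1 / (s + n + 1) - 1 / (r + n + 1)) / (r - s)` makes
the series telescope to `(1 / (s + 1) + ⋯ + 1 / r) / (r - s) = (H_r - H_s) / (r - s)`.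
-/

open MeasureTheory Filter Topology Set

theorem hasSum_sub_add_of_antitone {g : ℕ → ℝ} (hg : Antitone g)
    (hlim : Tendsto g atTop (𝓝 0)) (d : ℕ) :
    HasSum (fun n ↦ g n - g (n + d)) (∑ k ∈ Finset.range d, g k) := by
  set F : ℕ → ℝ := fun m ↦ ∑ k ∈ Finset.range d, g (m + k)
  have hF : ∀ n, g n - g (n + d) = F n - F (n + 1) := by
    intro n
    have h₁ := Finset.sum_range_succ (fun k ↦ g (n + k)) d
    have h₂ := Finset.sum_range_succ' (fun k ↦ g (n + k)) d
    simp only [F, add_assoc, add_comm 1, add_zero] at h₁ h₂ ⊢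
    linarith
  have hF_lim : Tendsto F atTop (𝓝 0) := by
    simpa using tendsto_finsetSum (Finset.range d) fun k _ ↦
      hlim.comp (tendsto_add_atTop_nat k)
  rw [hasSum_iff_tendsto_nat_of_nonneg fun n ↦ sub_nonneg.2 (hg (Nat.le_add_right n d))]
  simp_rw [hF, Finset.sum_range_sub']
  simpa [F] using tendsto_const_nhds.sub hF_lim

theorem hasSum_harmonic_sub_div_of_lt {r s : ℕ} (h : s < r) :
    HasSum (fun n : ℕ ↦ 1 / (((r : ℝ) + n + 1) * ((s : ℝ) + n + 1)))
      ((harmonic r - harmonic s : ℝ) / (r - s)) := by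
  obtain ⟨d, -, rfl⟩ := Nat.exists_eq_add_of_lt h
  set g : ℕ → ℝ := fun k ↦ 1 / ((s : ℝ) + k + 1)
  have hg : Antitone g := fun a b hab ↦
    one_div_le_one_div_of_le (by positivity) (by gcongr)
  have hlim : Tendsto g atTop (𝓝 0) := by
    refine (tendsto_one_div_add_atTop_nhds_zero_nat.comp (tendsto_add_atTop_nat s)).congr
      fun n ↦ ?_
    simp [g, add_comm]
  have hharmonic : ∑ k ∈ Finset.range (d + 1), g k = harmonic (s + d + 1) - harmonic s := by
    rw [harmonic, harmonic, add_assoc, Finset.sum_range_add _ s (d + 1)]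
    push_cast
    simp [g, add_assoc, one_div]
  have hterm : ∀ n : ℕ, 1 / ((((s + d + 1 : ℕ) : ℝ) + n + 1) * ((s : ℝ) + n + 1)) =
      (g n - g (n + (d + 1))) / ((d : ℝ) + 1) := by
    intro n
    simp only [g]
    push_cast
    field_simp
    ring
  have hgap : ((s + d + 1 : ℕ) : ℝ) - s = (d : ℝ) + 1 := by push_cast; ring
  simp only [hterm, hgap, ← hharmonic]
  exact (hasSum_sub_add_of_antitone hg hlim (d + 1)).div_const _

theorem hasSum_harmonic_sub_div {r s : ℕ} (h : r ≠ s) :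
    HasSum (fun n : ℕ ↦ 1 / (((r : ℝ) + n + 1) * ((s : ℝ) + n + 1)))
      ((harmonic r - harmonic s : ℝ) / (r - s)) := by
  rcases h.lt_or_gt with h | h
  · rw [← neg_div_neg_eq, neg_sub, neg_sub]
    simpa only [mul_comm] using hasSum_harmonic_sub_div_of_lt h
  · exact hasSum_harmonic_sub_div_of_lt h

theorem integral_Ioo_pow (n : ℕ) : ∫ x in Ioo (0 : ℝ) 1, x ^ n = 1 / (n + 1) := by
  rw [← integral_Ioc_eq_integral_Ioo, ← intervalIntegral.integral_of_le zero_le_one,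
    integral_pow]
  simp

theorem integral_Ioo_tsum_mul_pow {c : ℕ → ℝ} {e : ℕ → ℕ} (hc : ∀ n, 0 ≤ c n)
    (hsum : Summable fun n ↦ c n / (e n + 1)) :
    ∫ x in Ioo (0 : ℝ) 1, ∑' n, c n * x ^ e n = ∑' n, c n / (e n + 1) := by
  have hterm : ∀ n, ∫ x in Ioo (0 : ℝ) 1, c n * x ^ e n = c n / (e n + 1) := fun n ↦ by
    rw [integral_const_mul, integral_Ioo_pow, mul_one_div]
  have hnorm : ∀ n, ∫ x in Ioo (0 : ℝ) 1, ‖c n * x ^ e n‖ = c n / (e n + 1) := fun n ↦ by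
    rw [← hterm n]
    refine setIntegral_congr_fun measurableSet_Ioo fun x hx ↦ ?_
    exact Real.norm_of_nonneg (mul_nonneg (hc n) (pow_nonneg hx.1.le _))
  have hint : ∀ n, Integrable (fun x : ℝ ↦ c n * x ^ e n) (volume.restrict (Ioo 0 1)) :=
    fun n ↦ (continuous_const.mul (continuous_pow _)).integrableOn_Icc.mono_set
      Ioo_subset_Icc_self
  rw [← integral_tsum_of_summable_integral_norm hint (by simpa only [hnorm] using hsum)]
  exact tsum_congr hterm

theorem integral_Ioo_pow_mul_pow_div_eq_tsum (r s : ℕ) {x : ℝ} (hx : x ∈ Ioo 0 1) :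
    ∫ y in Ioo (0 : ℝ) 1, x ^ r * y ^ s / (1 - x * y) =
      ∑' n : ℕ, x ^ (r + n) / ((s : ℝ) + n + 1) := by
  have hgeom : EqOn (fun y ↦ x ^ r * y ^ s / (1 - x * y))
      (fun y ↦ ∑' n : ℕ, x ^ (r + n) * y ^ (s + n)) (Ioo 0 1) := fun y hy ↦ by
    have hxy : x * y < 1 := by nlinarith [hx.1, hx.2, hy.1, hy.2]
    simp only [pow_add, mul_mul_mul_comm _ (x ^ _), ← mul_pow, tsum_mul_left,
      tsum_geometric_of_lt_one (mul_nonneg hx.1.le hy.1.le) hxy, div_eq_mul_inv]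
  have hx₀ := hx.1.le
  have hsum : Summable fun n : ℕ ↦ x ^ (r + n) / ((s + n : ℕ) + 1 : ℝ) := by
    refine (summable_geometric_of_lt_one hx₀ hx.2).of_nonneg_of_le
      (fun n ↦ by positivity) fun n ↦ ?_
    calc x ^ (r + n) / ((s + n : ℕ) + 1 : ℝ) ≤ x ^ (r + n) :=
          div_le_self (by positivity) (le_add_of_nonneg_left (Nat.cast_nonneg _))
      _ ≤ x ^ n := pow_le_pow_of_le_one hx₀ hx.2.le (Nat.le_add_left n r)
  rw [setIntegral_congr_fun measurableSet_Ioo hgeom,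
    integral_Ioo_tsum_mul_pow (fun n ↦ by positivity) hsum]
  push_cast
  simp only [add_assoc]

theorem integral_integral_pow_mul_pow_div_eq_tsum (r s : ℕ)
    (hsum : Summable fun n : ℕ ↦ 1 / (((r : ℝ) + n + 1) * ((s : ℝ) + n + 1))) :
    ∫ x in (0 : ℝ)..1, ∫ y in (0 : ℝ)..1, x ^ r * y ^ s / (1 - x * y) =
      ∑' n : ℕ, 1 / (((r : ℝ) + n + 1) * ((s : ℝ) + n + 1)) := by
  have hcoeff : ∀ n : ℕ, ((s : ℝ) + n + 1)⁻¹ / ((r + n : ℕ) + 1) =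
      1 / (((r : ℝ) + n + 1) * ((s : ℝ) + n + 1)) := fun n ↦ by
    push_cast
    rw [inv_div_left, one_div, add_assoc (r : ℝ)]
  have hinner : EqOn (fun x ↦ ∫ y in (0 : ℝ)..1, x ^ r * y ^ s / (1 - x * y))
      (fun x ↦ ∑' n : ℕ, ((s : ℝ) + n + 1)⁻¹ * x ^ (r + n)) (Ioo 0 1) := fun x hx ↦ by
    dsimp only
    rw [intervalIntegral.integral_of_le zero_le_one, integral_Ioc_eq_integral_Ioo,
      integral_Ioo_pow_mul_pow_div_eq_tsum r s hx]
    simp only [div_eq_inv_mul]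
  rw [intervalIntegral.integral_of_le zero_le_one, integral_Ioc_eq_integral_Ioo,
    setIntegral_congr_fun measurableSet_Ioo hinner,
    integral_Ioo_tsum_mul_pow (fun n ↦ by positivity) (by simpa only [hcoeff] using hsum)]
  exact tsum_congr hcoeff

theorem beukers_Irs (r s : ℕ) (hrs : r ≠ s) :
    (∫ x in (0:ℝ)..1, ∫ y in (0:ℝ)..1, x ^ r * y ^ s / (1 - x * y)) =
      ((∑ k ∈ Finset.Icc 1 r, 1 / (k : ℝ)) - ∑ k ∈ Finset.Icc 1 s, 1 / (k : ℝ)) /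
        ((r : ℝ) - (s : ℝ)) := by
  have hsum := hasSum_harmonic_sub_div hrs
  rw [integral_integral_pow_mul_pow_div_eq_tsum r s hsum.summable, hsum.tsum_eq]
  simp [harmonic_eq_sum_Icc]
end

section
/- For nonnegative integers r > s, letting d_r = lcm{1,…,r}, the number d_r² · (H_r - H_s)/(r-s) is a positive integer, where H_n is the n-th harmonic number. -/
/-!
Write `d = d_r`. The difference `H_r - H_s` is `∑_{s<k≤r} 1/k`, and `d` times it is the
natural number `∑_{s<k≤r} d/k`, since every such `k` divides `d`. As also `r - s ∣ d`, the
quantity `d² (H_r - H_s)/(r - s)` is the product of the positive integers `d/(r - s)` and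
`∑_{s<k≤r} d/k`.
-/

open Finset

theorem sum_Icc_one_sub_sum_Icc_one {M : Type*} [AddCommGroup M] (f : ℕ → M) {s r : ℕ}
    (hsr : s ≤ r) : ∑ k ∈ Icc 1 r, f k - ∑ k ∈ Icc 1 s, f k = ∑ k ∈ Ioc s r, f k := by
  rw [← zero_add 1, Icc_add_one_left_eq_Ioc, Icc_add_one_left_eq_Ioc, sub_eq_iff_eq_add',
    sum_Ioc_consecutive f (Nat.zero_le s) hsr]

theorem natCast_mul_sum_one_div_of_forall_dvd {K : Type*} [DivisionSemiring K] [CharZero K]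
    {S : Finset ℕ} {d : ℕ} (hS : ∀ k ∈ S, k ∣ d) :
    (d : K) * ∑ k ∈ S, 1 / (k : K) = ((∑ k ∈ S, d / k : ℕ) : K) := by
  rw [mul_sum, Nat.cast_sum]
  exact sum_congr rfl fun k hk => by rw [mul_one_div, Nat.cast_div_charZero (hS k hk)]

theorem dr_sq_harmonic_diff (r s : ℕ) (hrs : s < r) :
    ∃ z : ℕ, 0 < z ∧
      ((Finset.lcm (Finset.Icc 1 r) id : ℕ) : ℝ) ^ 2 *
          (((∑ k ∈ Finset.Icc 1 r, 1 / (k : ℝ)) - ∑ k ∈ Finset.Icc 1 s, 1 / (k : ℝ)) /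
            ((r : ℝ) - (s : ℝ))) = (z : ℝ) := by
  set d := (Icc 1 r).lcm id
  have hd : 0 < d := Nat.lcmUpto_pos r
  have hdvd : ∀ k ∈ Icc 1 r, k ∣ d := fun k hk => dvd_lcm hk
  have hIoc : ∀ k ∈ Ioc s r, k ∣ d := fun k hk =>
    hdvd k (by simp only [mem_Ioc, mem_Icc] at hk ⊢; omega)
  have hrs_dvd : r - s ∣ d := hdvd _ (by simp only [mem_Icc]; omega)
  refine ⟨d / (r - s) * ∑ k ∈ Ioc s r, d / k, Nat.mul_pos ?_ ?_, ?_⟩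
  · exact Nat.div_pos (Nat.le_of_dvd hd hrs_dvd) (by omega)
  · refine sum_pos (fun k hk => ?_) ⟨r, by simp only [mem_Ioc]; omega⟩
    exact Nat.div_pos (Nat.le_of_dvd hd (hIoc k hk)) (by simp only [mem_Ioc] at hk; omega)
  · rw [sum_Icc_one_sub_sum_Icc_one _ hrs.le, ← Nat.cast_sub hrs.le, Nat.cast_mul,
      ← natCast_mul_sum_one_div_of_forall_dvd hIoc, Nat.cast_div_charZero hrs_dvd]
    ring
end

section
/- For every natural number n and every n-times continuously differentiable function f : [0,1] → ℝ, ∫₀¹ P_n(x) f(x) dx = ((-1)ⁿ/n!) ∫₀¹ xⁿ(1-x)ⁿ f⁽ⁿ⁾(x) dx. -/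
/-!
Integrate by parts `n` times. Each boundary term pairs a derivative of order `j < n` of
`xⁿ(1-x)ⁿ` with a derivative of `f`, and vanishes because `0` and `1` are roots of multiplicity
`n` of `xⁿ(1-x)ⁿ`.
-/

noncomputable def shiftedLegendre (n : ℕ) : ℝ → ℝ :=
  fun x => (1 / (n.factorial : ℝ)) * iteratedDeriv n (fun t : ℝ => t ^ n * (1 - t) ^ n) x

namespace Polynomial

theorem iteratedDeriv_eval {𝕜 : Type*} [NontriviallyNormedField 𝕜] (p : 𝕜[X]) (j : ℕ) :
    iteratedDeriv j (fun x => p.eval x) = fun x => (derivative^[j] p).eval x := by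
  induction j generalizing p with
  | zero => rfl
  | succ j ih =>
    have hderiv : _root_.deriv (fun x => p.eval x) = fun x => (derivative p).eval x := by
      ext x
      exact p.deriv
    rw [iteratedDeriv_succ', hderiv, ih, Function.iterate_succ_apply]

theorem isRoot_iterate_derivative_of_pow_dvd {R : Type*} [CommRing R] {p : R[X]} {t : R}
    {n j : ℕ} (h : (X - C t) ^ n ∣ p) (hj : j < n) : (derivative^[j] p).IsRoot t :=
  dvd_iff_isRoot.mp <| (dvd_pow_self _ (Nat.sub_ne_zero_of_lt hj)).trans
    (pow_sub_dvd_iterate_derivative_of_pow_dvd j h)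

end Polynomial

theorem intervalIntegral.integral_deriv_mul_eq_neg_integral_mul_deriv {u v : ℝ → ℝ} {a b : ℝ}
    (hu : ContDiff ℝ 1 u) (hv : ContDiff ℝ 1 v) (hua : u a = 0) (hub : u b = 0) :
    ∫ x in a..b, deriv u x * v x = -∫ x in a..b, u x * deriv v x := by
  have hu' := contDiff_one_iff_deriv.mp hu
  have hv' := contDiff_one_iff_deriv.mp hv
  rw [integral_mul_deriv_eq_deriv_mul (fun x _ => (hu'.1 x).hasDerivAt)
    (fun x _ => (hv'.1 x).hasDerivAt) (hu'.2.intervalIntegrable a b)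
    (hv'.2.intervalIntegrable a b), hua, hub]
  ring

theorem intervalIntegral.integral_iteratedDeriv_mul_eq_neg_one_pow_mul {u f : ℝ → ℝ} {a b : ℝ}
    (k : ℕ) (hu : ContDiff ℝ k u) (hf : ContDiff ℝ k f)
    (hua : ∀ j < k, iteratedDeriv j u a = 0) (hub : ∀ j < k, iteratedDeriv j u b = 0) :
    ∫ x in a..b, iteratedDeriv k u x * f x =
      (-1) ^ k * ∫ x in a..b, u x * iteratedDeriv k f x := by
  induction k generalizing u with
  | zero => simp
  | succ k ih =>
    push_cast at hu hf
    have hderiv := ih hu.deriv' (hf.of_le (by simp))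
      (fun j hj => by rw [← iteratedDeriv_succ']; exact hua (j + 1) (by omega))
      (fun j hj => by rw [← iteratedDeriv_succ']; exact hub (j + 1) (by omega))
    have hf_deriv : ContDiff ℝ 1 (iteratedDeriv k f) := contDiff_one_iff_deriv.mpr
      ⟨hf.differentiable_iteratedDeriv' k,
        iteratedDeriv_succ (f := f) ▸ hf.continuous_iteratedDeriv (k + 1) (by simp)⟩
    rw [iteratedDeriv_succ', hderiv, integral_deriv_mul_eq_neg_integral_mul_deriv
      (hu.of_le (by simp)) hf_deriv (hua 0 (by omega)) (hub 0 (by omega)), ← iteratedDeriv_succ]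
    ring

open Polynomial in
theorem iteratedDeriv_pow_mul_one_sub_pow_eq_zero {n j : ℕ} (hj : j < n) {t : ℝ}
    (ht : t = 0 ∨ t = 1) : iteratedDeriv j (fun x : ℝ => x ^ n * (1 - x) ^ n) t = 0 := by
  have hpoly : (fun x : ℝ => x ^ n * (1 - x) ^ n) =
      fun x => (X ^ n * (1 - X) ^ n : ℝ[X]).eval x := by
    simp
  rw [hpoly, iteratedDeriv_eval]
  refine isRoot_iterate_derivative_of_pow_dvd ?_ hj
  rcases ht with rfl | rfl
  · simp
  · refine dvd_mul_of_dvd_right (pow_dvd_pow_of_dvd ⟨-1, ?_⟩ n) _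
    simp

theorem shiftedLegendre_integration_by_parts (n : ℕ) (f : ℝ → ℝ) (hf : ContDiff ℝ n f) :
    (∫ x in (0:ℝ)..1, shiftedLegendre n x * f x) =
      ((-1 : ℝ) ^ n / (n.factorial : ℝ)) *
        ∫ x in (0:ℝ)..1, x ^ n * (1 - x) ^ n * iteratedDeriv n f x := by
  have hu : ContDiff ℝ n (fun x : ℝ => x ^ n * (1 - x) ^ n) := by fun_prop
  calc (∫ x in (0:ℝ)..1, shiftedLegendre n x * f x)
      = (1 / (n.factorial : ℝ)) *
          ∫ x in (0:ℝ)..1, iteratedDeriv n (fun t : ℝ => t ^ n * (1 - t) ^ n) x * f x := by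
        simp only [shiftedLegendre, mul_assoc, intervalIntegral.integral_const_mul]
    _ = ((-1 : ℝ) ^ n / (n.factorial : ℝ)) *
          ∫ x in (0:ℝ)..1, x ^ n * (1 - x) ^ n * iteratedDeriv n f x := by
        rw [intervalIntegral.integral_iteratedDeriv_mul_eq_neg_one_pow_mul n hu hf
          (fun j hj => iteratedDeriv_pow_mul_one_sub_pow_eq_zero hj (.inl rfl))
          (fun j hj => iteratedDeriv_pow_mul_one_sub_pow_eq_zero hj (.inr rfl))]
        ring
end

section
/- The maximum of g(x,y) = x(1-x)y(1-y)/(1-xy) over [0,1)² equals Φ⁵, where Φ = (√5 - 1)/2 is the inverse golden ratio, attained at x = y = Φ. -/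
/-!
Any root `c` of `c ^ 2 + c = 1` satisfies `1 - c = c ^ 2` and `1 - c ^ 2 = c`, so `g(c, c) = c ^ 5`.
For the bound, write `t = √(xy)`: since `x + y ≥ 2t`, the numerator
`xy (1 - (x + y) + xy)` is at most `t ^ 2 (1 - t) ^ 2`, and `g(x, y) ≤ t ^ 2 (1 - t) / (1 + t)`.
For `c ≥ 0` the cubic `c ^ 5 (1 + t) - t ^ 2 (1 - t)` factors as `(t - c) ^ 2 (t + c ^ 3)`,
which is nonnegative for `t ≥ 0`.
-/

lemma mul_one_sub_mul_mul_one_sub_le_sq_mul_sq {x y : ℝ} (hx : 0 ≤ x) (hy : 0 ≤ y) :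
    x * (1 - x) * y * (1 - y) ≤ √(x * y) ^ 2 * (1 - √(x * y)) ^ 2 := by
  have hxy : √(x * y) ^ 2 = x * y := Real.sq_sqrt (mul_nonneg hx hy)
  have hamgm : 2 * √(x * y) ≤ x + y := by
    rw [Real.sqrt_mul hx]
    nlinarith [sq_nonneg (√x - √y), Real.sq_sqrt hx, Real.sq_sqrt hy]
  nlinarith [mul_le_mul_of_nonneg_left hamgm (mul_nonneg hx hy)]

section GoldenConj

variable {c : ℝ}

lemma pow_five_eq_of_sq_add_self_eq_one (hc : c ^ 2 + c = 1) :
    c * (1 - c) * c * (1 - c) / (1 - c * c) = c ^ 5 := by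
  have hc0 : c ≠ 0 := by rintro rfl; norm_num at hc
  rw [show 1 - c * c = c by linear_combination -hc, show 1 - c = c ^ 2 by linear_combination -hc]
  field_simp

lemma sq_mul_one_sub_le_pow_five_mul_one_add (hc : c ^ 2 + c = 1) (hc0 : 0 ≤ c) {t : ℝ}
    (ht : 0 ≤ t) : t ^ 2 * (1 - t) ≤ c ^ 5 * (1 + t) := by
  have hfactor : c ^ 5 * (1 + t) - t ^ 2 * (1 - t) = (t - c) ^ 2 * (t + c ^ 3) := by
    linear_combination ((1 - c) * t ^ 2 + c ^ 2 * (c + 1) * t) * hc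
  nlinarith [mul_nonneg (sq_nonneg (t - c)) (add_nonneg ht (pow_nonneg hc0 3))]

lemma mul_one_sub_mul_mul_one_sub_div_le_pow_five (hc : c ^ 2 + c = 1) (hc0 : 0 ≤ c)
    {x y : ℝ} (hx : 0 ≤ x) (hy : 0 ≤ y) (hxy : x * y < 1) :
    x * (1 - x) * y * (1 - y) / (1 - x * y) ≤ c ^ 5 := by
  set t := √(x * y)
  have ht : 0 ≤ t := Real.sqrt_nonneg _
  have ht2 : t ^ 2 = x * y := Real.sq_sqrt (mul_nonneg hx hy)
  have ht1 : t ≤ 1 := by nlinarith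
  rw [div_le_iff₀ (by linarith)]
  calc x * (1 - x) * y * (1 - y) ≤ t ^ 2 * (1 - t) ^ 2 :=
        mul_one_sub_mul_mul_one_sub_le_sq_mul_sq hx hy
    _ = t ^ 2 * (1 - t) * (1 - t) := by ring
    _ ≤ c ^ 5 * (1 + t) * (1 - t) :=
        mul_le_mul_of_nonneg_right (sq_mul_one_sub_le_pow_five_mul_one_add hc hc0 ht) (by linarith)
    _ = c ^ 5 * (1 - x * y) := by rw [← ht2]; ring

end GoldenConj

lemma sqrt_five_sub_one_div_two_sq_add_self :
    ((√5 - 1) / 2) ^ 2 + (√5 - 1) / 2 = 1 := by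
  linear_combination Real.sq_sqrt (show (0 : ℝ) ≤ 5 by norm_num) / 4

theorem max_g_unit_square :
    (((Real.sqrt 5 - 1) / 2) * (1 - (Real.sqrt 5 - 1) / 2) * ((Real.sqrt 5 - 1) / 2) *
        (1 - (Real.sqrt 5 - 1) / 2) / (1 - ((Real.sqrt 5 - 1) / 2) * ((Real.sqrt 5 - 1) / 2))
      = ((Real.sqrt 5 - 1) / 2) ^ 5) ∧
    ∀ x ∈ Set.Ico (0:ℝ) 1, ∀ y ∈ Set.Ico (0:ℝ) 1,
      x * (1 - x) * y * (1 - y) / (1 - x * y) ≤ ((Real.sqrt 5 - 1) / 2) ^ 5 := by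
  have hc := sqrt_five_sub_one_div_two_sq_add_self
  have hc0 : 0 ≤ (√5 - 1) / 2 := by
    have : 1 ≤ √5 := Real.one_le_sqrt.mpr (by norm_num)
    linarith
  refine ⟨pow_five_eq_of_sq_add_self_eq_one hc, fun x ⟨hx0, hx1⟩ y ⟨hy0, hy1⟩ => ?_⟩
  exact mul_one_sub_mul_mul_one_sub_div_le_pow_five hc hc0 hx0 hy0
    (mul_lt_one_of_nonneg_of_lt_one_left hx0 hx1 hy1.le)
end

section
/- For every x, y ∈ [0,1) one has x(1-x)y(1-y)/(1-xy) ≤ ((√5-1)/2)⁵. -/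
/-!
Since `x + y ≥ 2√(xy)`, the numerator is at most `t² (1 - t)²` with `t = √(xy)`, and
`1 - xy = (1 - t)(1 + t)`, so the quotient is at most `t² (1 - t) / (1 + t)`. With
`r = (√5 - 1) / 2 = φ⁻¹`, which satisfies `r² + r = 1`, one has the identity
`r⁵ (1 + t) - t² (1 - t) = (t - r)² (t + r³)`, so this one-variable function is maximised at
`t = r` with value `r⁵`.
-/

open Real goldenRatio

theorem inv_goldenRatio_sq_add_self : φ⁻¹ ^ 2 + φ⁻¹ = 1 := by
  rw [inv_goldenRatio, neg_sq, goldenConj_sq]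
  ring

theorem sq_mul_one_sub_le_inv_goldenRatio_pow_five_mul {t : ℝ} (ht : 0 ≤ t) :
    t ^ 2 * (1 - t) ≤ φ⁻¹ ^ 5 * (1 + t) := by
  set r := φ⁻¹
  have hr : r ^ 2 + r = 1 := inv_goldenRatio_sq_add_self
  have hr3 : r ^ 3 = 2 * r - 1 := by linear_combination (r - 1) * hr
  have hr5 : r ^ 5 = 5 * r - 3 := by linear_combination (r ^ 3 - r ^ 2 + 2 * r - 3) * hr
  have key : r ^ 5 * (1 + t) - t ^ 2 * (1 - t) = (t - r) ^ 2 * (t + r ^ 3) := by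
    linear_combination (1 + t) * hr5 - (t - r) ^ 2 * hr3 + (3 * t - 2 * r + 3) * hr
  have hr_pos : 0 < r := inv_pos.mpr goldenRatio_pos
  have : 0 ≤ (t - r) ^ 2 * (t + r ^ 3) := by positivity
  linarith

theorem sq_mul_one_sub_sq_div_one_sub_sq_le {t : ℝ} (ht₀ : 0 ≤ t) (ht₁ : t < 1) :
    t ^ 2 * (1 - t) ^ 2 / (1 - t ^ 2) ≤ φ⁻¹ ^ 5 := by
  have h : 1 - t ^ 2 = (1 - t) * (1 + t) := by ring
  have h1t : 0 < 1 - t := by linarith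
  rw [h, div_le_iff₀ (by positivity)]
  calc t ^ 2 * (1 - t) ^ 2 = (1 - t) * (t ^ 2 * (1 - t)) := by ring
    _ ≤ (1 - t) * (φ⁻¹ ^ 5 * (1 + t)) := by
        gcongr (1 - t) * ?_
        exact sq_mul_one_sub_le_inv_goldenRatio_pow_five_mul ht₀
    _ = φ⁻¹ ^ 5 * ((1 - t) * (1 + t)) := by ring

theorem mul_one_sub_mul_mul_one_sub_le {x y : ℝ} (hx : 0 ≤ x) (hy : 0 ≤ y) :
    x * (1 - x) * y * (1 - y) ≤ x * y * (1 - √(x * y)) ^ 2 := by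
  have hs : √(x * y) ^ 2 = x * y := sq_sqrt (mul_nonneg hx hy)
  have amgm : 2 * √(x * y) ≤ x + y := by
    nlinarith [sq_nonneg (x - y), sqrt_nonneg (x * y)]
  have : (1 - x) * (1 - y) ≤ (1 - √(x * y)) ^ 2 := by nlinarith
  calc x * (1 - x) * y * (1 - y) = x * y * ((1 - x) * (1 - y)) := by ring
    _ ≤ x * y * (1 - √(x * y)) ^ 2 := by gcongr

theorem g_le_phi_pow_five (x y : ℝ) (hx : x ∈ Set.Ico (0:ℝ) 1) (hy : y ∈ Set.Ico (0:ℝ) 1) :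
    x * (1 - x) * y * (1 - y) / (1 - x * y) ≤ ((Real.sqrt 5 - 1) / 2) ^ 5 := by
  obtain ⟨hx₀, hx₁⟩ := hx
  obtain ⟨hy₀, hy₁⟩ := hy
  have hxy₀ : 0 ≤ x * y := mul_nonneg hx₀ hy₀
  have hxy₁ : x * y < 1 := by nlinarith
  have hs : √(x * y) ^ 2 = x * y := sq_sqrt hxy₀
  have hr : (√5 - 1) / 2 = φ⁻¹ := by rw [inv_goldenRatio]; ring
  calc x * (1 - x) * y * (1 - y) / (1 - x * y)
      ≤ x * y * (1 - √(x * y)) ^ 2 / (1 - x * y) := by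
        gcongr ?_ / _
        exact mul_one_sub_mul_mul_one_sub_le hx₀ hy₀
    _ = √(x * y) ^ 2 * (1 - √(x * y)) ^ 2 / (1 - √(x * y) ^ 2) := by rw [hs]
    _ ≤ ((√5 - 1) / 2) ^ 5 := by
        rw [hr]
        refine sq_mul_one_sub_sq_div_one_sub_sq_le (sqrt_nonneg _) ?_
        exact (sqrt_lt' one_pos).mpr (by simpa using hxy₁)
end

section
/- The double integral -∫₀¹∫₀¹ ln(xy)/(1-xy) dx dy equals 2ζ(3). -/
/-!
For `0 ≤ t < 1` we have `-log t / (1 - t) = ∑ₙ (-log t) tⁿ` with nonnegative terms, so with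
`t = x y` both integrals may be taken termwise. Since `∫₀¹ yⁿ log y dy = -1 / (n + 1)²`, the
inner integral of the `n`-th term is `xⁿ / (n + 1)² - xⁿ log x / (n + 1)`, and integrating this
in `x` gives `2 / (n + 1)³`.
-/

open MeasureTheory Set Real
open scoped Interval

theorem MeasureTheory.integral_tsum_of_nonneg {α ι : Type*} [MeasurableSpace α] [Countable ι]
    {μ : Measure α} {F : ι → α → ℝ} (hF : ∀ i, Integrable (F i) μ)
    (hF_nonneg : ∀ i, 0 ≤ᵐ[μ] F i) (hsum : Summable fun i => ∫ a, F i a ∂μ) :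
    ∫ a, ∑' i, F i a ∂μ = ∑' i, ∫ a, F i a ∂μ := by
  refine (integral_tsum_of_summable_integral_norm hF (hsum.congr fun i => ?_)).symm
  exact integral_congr_ae <| (hF_nonneg i).mono fun a ha => (norm_of_nonneg ha).symm

theorem intervalIntegral.integral_tsum_of_nonneg {ι : Type*} [Countable ι] {a b : ℝ}
    (hab : a ≤ b) {F : ι → ℝ → ℝ} (hF : ∀ i, IntervalIntegrable (F i) volume a b)
    (hF_nonneg : ∀ i, ∀ x ∈ Ioc a b, 0 ≤ F i x)
    (hsum : Summable fun i => ∫ x in a..b, F i x) :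
    ∫ x in a..b, ∑' i, F i x = ∑' i, ∫ x in a..b, F i x := by
  simp only [intervalIntegral.integral_of_le hab] at hsum ⊢
  exact MeasureTheory.integral_tsum_of_nonneg (fun i => (hF i).1)
    (fun i => (ae_restrict_iff' measurableSet_Ioc).2 (ae_of_all _ (hF_nonneg i))) hsum

theorem intervalIntegrable_pow_mul_log (n : ℕ) (a b : ℝ) :
    IntervalIntegrable (fun x => x ^ n * log x) volume a b :=
  intervalIntegral.intervalIntegrable_log'.continuousOn_mul (continuous_pow n).continuousOn

theorem integral_pow_mul_log_zero_one (n : ℕ) :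
    ∫ x in (0:ℝ)..1, x ^ n * log x = -1 / ((n:ℝ) + 1) ^ 2 := by
  have hn : (n:ℝ) + 1 ≠ 0 := by positivity
  -- `x ^ (n + 1) * log x` extends continuously to `0` because `x * log x → 0`
  have hcont : Continuous fun x : ℝ => x ^ (n + 1) * log x :=
    ((continuous_pow n).mul continuous_mul_log).congr fun x => by simp only [Pi.mul_apply]; ring
  rw [intervalIntegral.integral_eq_sub_of_hasDerivAt_of_le (f := fun x =>
      x ^ (n + 1) * log x / ((n:ℝ) + 1) - x ^ (n + 1) / ((n:ℝ) + 1) ^ 2) zero_le_one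
      (by fun_prop) (fun x hx => ?_) (intervalIntegrable_pow_mul_log n 0 1)]
  · simp only [one_pow, log_one, zero_pow n.succ_ne_zero, log_zero]
    field_simp
    ring
  · have hderiv :=
      (((hasDerivAt_pow (n + 1) x).mul (hasDerivAt_log hx.1.ne')).div_const ((n:ℝ) + 1)).sub
        ((hasDerivAt_pow (n + 1) x).div_const (((n:ℝ) + 1) ^ 2))
    convert hderiv using 1
    · rfl
    rw [Nat.add_sub_cancel, pow_succ]
    have hx0 : x ≠ 0 := hx.1.ne'
    field_simp
    push_cast
    ring

theorem intervalIntegrable_mul_pow_sub_mul_pow_mul_log (n : ℕ) (a b : ℝ) :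
    IntervalIntegrable (fun x => a * x ^ n - b * (x ^ n * log x)) volume 0 1 :=
  (((continuous_pow n).intervalIntegrable 0 1).const_mul a).sub
    ((intervalIntegrable_pow_mul_log n 0 1).const_mul b)

theorem integral_mul_pow_sub_mul_pow_mul_log (n : ℕ) (a b : ℝ) :
    ∫ x in (0:ℝ)..1, a * x ^ n - b * (x ^ n * log x) =
      a / ((n:ℝ) + 1) + b / ((n:ℝ) + 1) ^ 2 := by
  rw [intervalIntegral.integral_sub, intervalIntegral.integral_const_mul,
    intervalIntegral.integral_const_mul, integral_pow, integral_pow_mul_log_zero_one]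
  · ring
  · exact ((continuous_pow n).intervalIntegrable 0 1).const_mul a
  · exact (intervalIntegrable_pow_mul_log n 0 1).const_mul b

/-- `beukersTerm n x = ∫₀¹ -log (x y) (x y) ^ n dy`. -/
noncomputable def beukersTerm (n : ℕ) (x : ℝ) : ℝ :=
  1 / ((n:ℝ) + 1) ^ 2 * x ^ n - 1 / ((n:ℝ) + 1) * (x ^ n * log x)

theorem neg_log_mul_mul_pow_eqOn {x : ℝ} (hx : 0 < x) (n : ℕ) :
    EqOn (fun y => -log (x * y) * (x * y) ^ n)
      (fun y => -log x * x ^ n * y ^ n - x ^ n * (y ^ n * log y)) (Ι 0 1) := by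
  intro y hy
  rw [uIoc_of_le zero_le_one] at hy
  simp only [log_mul hx.ne' hy.1.ne', mul_pow]
  ring

theorem intervalIntegrable_neg_log_mul_mul_pow {x : ℝ} (hx : 0 < x) (n : ℕ) :
    IntervalIntegrable (fun y => -log (x * y) * (x * y) ^ n) volume 0 1 :=
  (intervalIntegrable_mul_pow_sub_mul_pow_mul_log n _ _).congr
    (neg_log_mul_mul_pow_eqOn hx n).symm

theorem integral_neg_log_mul_mul_pow {x : ℝ} (hx : 0 < x) (n : ℕ) :
    ∫ y in (0:ℝ)..1, -log (x * y) * (x * y) ^ n = beukersTerm n x := by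
  rw [intervalIntegral.integral_congr_ae
      (ae_of_all _ fun y hy => neg_log_mul_mul_pow_eqOn hx n hy),
    integral_mul_pow_sub_mul_pow_mul_log, beukersTerm]
  field_simp
  ring

theorem beukersTerm_nonneg (n : ℕ) {x : ℝ} (hx0 : 0 ≤ x) (hx1 : x ≤ 1) :
    0 ≤ beukersTerm n x := by
  have hlog : x ^ n * log x ≤ 0 :=
    mul_nonpos_of_nonneg_of_nonpos (pow_nonneg hx0 n) (log_nonpos hx0 hx1)
  have : 1 / ((n:ℝ) + 1) * (x ^ n * log x) ≤ 1 / ((n:ℝ) + 1) ^ 2 * x ^ n :=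
    (mul_nonpos_of_nonneg_of_nonpos (by positivity) hlog).trans (by positivity)
  exact sub_nonneg.2 this

theorem beukersTerm_le (n : ℕ) {x : ℝ} (hx0 : 0 ≤ x) (hx1 : x ≤ 1) :
    beukersTerm n x ≤ (1 - log x) * x ^ n := by
  have hn : (1:ℝ) ≤ (n:ℝ) + 1 := by simp
  have hlog : 0 ≤ -(x ^ n * log x) :=
    neg_nonneg.2 (mul_nonpos_of_nonneg_of_nonpos (pow_nonneg hx0 n) (log_nonpos hx0 hx1))
  have hpow : 1 / ((n:ℝ) + 1) ^ 2 * x ^ n ≤ x ^ n :=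
    mul_le_of_le_one_left (pow_nonneg hx0 n)
      (div_le_one_of_le₀ (one_le_pow₀ hn) (by positivity))
  have hpow_log : 1 / ((n:ℝ) + 1) * -(x ^ n * log x) ≤ -(x ^ n * log x) :=
    mul_le_of_le_one_left hlog (div_le_one_of_le₀ hn (by positivity))
  rw [beukersTerm]
  linarith

theorem summable_beukersTerm {x : ℝ} (hx0 : 0 ≤ x) (hx1 : x < 1) :
    Summable fun n => beukersTerm n x :=
  .of_nonneg_of_le (fun n => beukersTerm_nonneg n hx0 hx1.le)
    (fun n => beukersTerm_le n hx0 hx1.le) ((summable_geometric_of_lt_one hx0 hx1).mul_left _)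

theorem integral_beukersTerm (n : ℕ) :
    ∫ x in (0:ℝ)..1, beukersTerm n x = 2 / ((n:ℝ) + 1) ^ 3 := by
  unfold beukersTerm
  rw [integral_mul_pow_sub_mul_pow_mul_log]
  field_simp
  ring

theorem hasSum_neg_log_mul_pow {t : ℝ} (ht0 : 0 ≤ t) (ht1 : t < 1) :
    HasSum (fun n : ℕ => -log t * t ^ n) (-log t / (1 - t)) := by
  simpa only [div_eq_mul_inv] using (hasSum_geometric_of_lt_one ht0 ht1).mul_left (-log t)

theorem integral_log_mul_div_one_sub_mul {x : ℝ} (hx0 : 0 < x) (hx1 : x < 1) :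
    ∫ y in (0:ℝ)..1, log (x * y) / (1 - x * y) = -∑' n, beukersTerm n x := by
  have hseries : ∀ y ∈ Ι (0:ℝ) 1,
      log (x * y) / (1 - x * y) = -∑' n : ℕ, -log (x * y) * (x * y) ^ n := by
    intro y hy
    rw [uIoc_of_le zero_le_one] at hy
    have hxy : x * y < 1 := by nlinarith [hy.1, hy.2]
    rw [(hasSum_neg_log_mul_pow (mul_pos hx0 hy.1).le hxy).tsum_eq, neg_div, neg_neg]
  rw [intervalIntegral.integral_congr_ae (ae_of_all _ hseries), intervalIntegral.integral_neg,
    intervalIntegral.integral_tsum_of_nonneg zero_le_one]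
  · simp_rw [integral_neg_log_mul_mul_pow hx0]
  · exact intervalIntegrable_neg_log_mul_mul_pow hx0
  · intro n y hy
    have hxy := mul_pos hx0 hy.1
    exact mul_nonneg (neg_nonneg.2 (log_nonpos hxy.le (by nlinarith [hy.2]))) (pow_nonneg hxy.le n)
  · simpa only [integral_neg_log_mul_mul_pow hx0] using summable_beukersTerm hx0.le hx1

theorem beukers_integral_zeta_three :
    -(∫ x in (0:ℝ)..1, ∫ y in (0:ℝ)..1, Real.log (x * y) / (1 - x * y)) =
      2 * ∑' n : ℕ, 1 / ((n : ℝ) + 1) ^ 3 := by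
  have hinner : ∀ᵐ x, x ∈ Ι (0:ℝ) 1 →
      -∫ y in (0:ℝ)..1, log (x * y) / (1 - x * y) = ∑' n, beukersTerm n x := by
    filter_upwards [(countable_singleton (1:ℝ)).ae_notMem volume] with x hx1 hx
    rw [uIoc_of_le zero_le_one] at hx
    rw [integral_log_mul_div_one_sub_mul hx.1 (lt_of_le_of_ne hx.2 hx1), neg_neg]
  have hzeta : Summable fun n : ℕ => 1 / ((n:ℝ) + 1) ^ 3 := by
    simpa using (summable_nat_add_iff 1).2 (Real.summable_one_div_nat_pow.2 (by norm_num : 1 < 3))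
  rw [← intervalIntegral.integral_neg, intervalIntegral.integral_congr_ae hinner,
    intervalIntegral.integral_tsum_of_nonneg zero_le_one (F := beukersTerm)
      (fun n => intervalIntegrable_mul_pow_sub_mul_pow_mul_log n _ _)
      (fun n x hx => beukersTerm_nonneg n hx.1.le hx.2)]
  · simp_rw [integral_beukersTerm, ← tsum_mul_left, mul_one_div]
  · simpa only [integral_beukersTerm, mul_one_div] using hzeta.mul_left 2
end

section
/- For nonnegative integers r ≠ s, -∫₀¹∫₀¹ xʳyˢ ln(xy)/(1-xy) dx dy = (H_r⁽²⁾ - H_s⁽²⁾)/(r - s), where H_n⁽²⁾ = ∑_{k=1}^{n} 1/k² (with H_0⁽²⁾ = 0). -/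
/-!
Since `0 ≤ xy < 1` on the open square, `-log(xy)/(1 - xy) = ∑ₖ (xy)ᵏ (-log x - log y)` with
nonnegative terms, so both integrals may be taken termwise. The `k`-th term integrates to
`1/(a²b) + 1/(ab²) = (1/b² - 1/a²)/(r - s)` with `a = r + k + 1`, `b = s + k + 1`, and the
resulting series is the difference of the tails `ζ(2) - H_s⁽²⁾` and `ζ(2) - H_r⁽²⁾`.
-/

open MeasureTheory Real Set Finset intervalIntegral

theorem hasSum_integral_of_nonneg {α ι : Type*} [MeasurableSpace α] [Countable ι]
    {μ : Measure α} {f : ι → α → ℝ} {F : α → ℝ} (hf : ∀ i, Integrable (f i) μ)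
    (hf0 : ∀ i, 0 ≤ᵐ[μ] f i) (hF : ∀ᵐ x ∂μ, HasSum (f · x) (F x))
    (hs : Summable fun i => ∫ x, f i x ∂μ) :
    HasSum (fun i => ∫ x, f i x ∂μ) (∫ x, F x ∂μ) := by
  have hnorm : Summable fun i => ∫ x, ‖f i x‖ ∂μ := by
    refine hs.congr fun i => MeasureTheory.integral_congr_ae ?_
    filter_upwards [hf0 i] with x hx using (Real.norm_of_nonneg hx).symm
  have hF' : ∫ x, F x ∂μ = ∫ x, ∑' i, f i x ∂μ := by
    refine MeasureTheory.integral_congr_ae ?_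
    filter_upwards [hF] with x hx using hx.tsum_eq.symm
  exact hF' ▸ hasSum_integral_of_summable_integral_norm hf hnorm

theorem hasSum_intervalIntegral_of_nonneg {f : ℕ → ℝ → ℝ} {F : ℝ → ℝ} {a b : ℝ} (hab : a ≤ b)
    (hf : ∀ k, IntervalIntegrable (f k) volume a b) (hf0 : ∀ k, ∀ x ∈ Ioo a b, 0 ≤ f k x)
    (hF : ∀ x ∈ Ioo a b, HasSum (f · x) (F x))
    (hs : Summable fun k => ∫ x in a..b, f k x) :
    HasSum (fun k => ∫ x in a..b, f k x) (∫ x in a..b, F x) := by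
  have hIoo : ∀ {p : ℝ → Prop}, (∀ x ∈ Ioo a b, p x) → ∀ᵐ x ∂volume.restrict (Ioc a b), p x :=
    fun h => (ae_restrict_congr_set Ioo_ae_eq_Ioc).mp
      (ae_restrict_of_forall_mem measurableSet_Ioo h)
  simp only [intervalIntegral.integral_of_le hab] at hs ⊢
  exact hasSum_integral_of_nonneg (fun k => (hf k).1) (fun k => hIoo (hf0 k)) (hIoo hF) hs

theorem intervalIntegrable_pow_mul {f : ℝ → ℝ} {a b : ℝ} (hf : IntervalIntegrable f volume a b)
    (m : ℕ) : IntervalIntegrable (fun x => x ^ m * f x) volume a b :=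
  hf.continuousOn_mul (continuous_pow m).continuousOn

theorem integral_pow_mul_log (m : ℕ) :
    ∫ x in (0:ℝ)..1, x ^ m * log x = -(1 / ((m:ℝ) + 1) ^ 2) := by
  set G : ℝ → ℝ := fun x => x ^ (m + 1) * log x / ((m:ℝ) + 1) - x ^ (m + 1) / ((m:ℝ) + 1) ^ 2
  have hderiv : ∀ x ∈ Ioo (0:ℝ) 1, HasDerivAt G (x ^ m * log x) x := by
    intro x hx
    have hx0 : x ≠ 0 := hx.1.ne'
    have hm : (m:ℝ) + 1 ≠ 0 := by positivity
    refine ((((hasDerivAt_pow (m + 1) x).mul (hasDerivAt_log hx0)).div_const _).sub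
      ((hasDerivAt_pow (m + 1) x).div_const _)).congr_deriv ?_
    field_simp
    push_cast
    ring
  have hcont : ContinuousOn G (Icc 0 1) := by
    have hG : G = fun x =>
        x ^ m * (x * log x) / ((m:ℝ) + 1) - x ^ (m + 1) / ((m:ℝ) + 1) ^ 2 := by
      funext x; simp only [G, pow_succ, mul_assoc]
    rw [hG]
    fun_prop
  rw [integral_eq_sub_of_hasDerivAt_of_le zero_le_one hcont hderiv
    (intervalIntegrable_pow_mul intervalIntegrable_log' m)]
  simp [G]

theorem intervalIntegrable_pow_mul_sub_mul_log (m : ℕ) (a b : ℝ) :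
    IntervalIntegrable (fun x => x ^ m * (a - b * log x)) volume 0 1 :=
  intervalIntegrable_pow_mul (intervalIntegrable_const.sub (intervalIntegrable_log'.const_mul b)) m

theorem integral_pow_mul_sub_mul_log (m : ℕ) (a b : ℝ) :
    ∫ x in (0:ℝ)..1, x ^ m * (a - b * log x) = a / ((m:ℝ) + 1) + b / ((m:ℝ) + 1) ^ 2 := by
  have hsplit : ∀ x : ℝ, x ^ m * (a - b * log x) = a * x ^ m - b * (x ^ m * log x) :=
    fun x => by ring
  simp only [hsplit]
  rw [intervalIntegral.integral_sub ((intervalIntegral.intervalIntegrable_pow m).const_mul a)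
      ((intervalIntegrable_pow_mul intervalIntegrable_log' m).const_mul b),
    intervalIntegral.integral_const_mul, intervalIntegral.integral_const_mul, integral_pow,
    integral_pow_mul_log]
  simp
  ring

theorem integral_pow_mul_inv_sq_sub_inv_mul_log {m n : ℕ} (hmn : m ≠ n) :
    ∫ x in (0:ℝ)..1, x ^ m * (1 / ((n:ℝ) + 1) ^ 2 - 1 / ((n:ℝ) + 1) * log x) =
      (1 / ((n:ℝ) + 1) ^ 2 - 1 / ((m:ℝ) + 1) ^ 2) / ((m:ℝ) - n) := by
  have hmn' : (m:ℝ) - n ≠ 0 := sub_ne_zero.mpr (Nat.cast_injective.ne hmn)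
  rw [integral_pow_mul_sub_mul_log]
  field_simp
  ring

theorem hasSum_pow_add_mul_pow_add (r s : ℕ) {x y : ℝ} (h0 : 0 ≤ x * y) (h1 : x * y < 1)
    (c : ℝ) :
    HasSum (fun k => x ^ (r + k) * (y ^ (s + k) * c)) (x ^ r * y ^ s * c / (1 - x * y)) := by
  have h := (hasSum_geometric_of_lt_one h0 h1).mul_left (x ^ r * y ^ s * c)
  have hterm : (fun k => x ^ r * y ^ s * c * (x * y) ^ k) =
      fun k => x ^ (r + k) * (y ^ (s + k) * c) := funext fun k => by ring
  rwa [← div_eq_mul_inv, hterm] at h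

theorem summable_pow_add_mul_of_le (r : ℕ) {x C : ℝ} (h0 : 0 ≤ x) (h1 : x < 1) {c : ℕ → ℝ}
    (hc0 : ∀ k, 0 ≤ c k) (hcC : ∀ k, c k ≤ C) : Summable fun k => x ^ (r + k) * c k :=
  .of_nonneg_of_le (fun k => by have := hc0 k; positivity)
    (fun k => by rw [pow_add, mul_assoc]; gcongr; exact hcC k)
    (((summable_geometric_of_lt_one h0 h1).mul_right C).mul_left (x ^ r))

theorem hasSum_one_div_add_one_sq (n : ℕ) :
    HasSum (fun k : ℕ => 1 / (((n + k : ℕ) : ℝ) + 1) ^ 2)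
      (π ^ 2 / 6 - ∑ k ∈ Icc 1 n, 1 / (k : ℝ) ^ 2) := by
  have h := (hasSum_nat_add_iff' (n + 1)).mpr hasSum_zeta_two
  rw [range_eq_Ico, sum_eq_sum_Ico_succ_bot (by omega : 0 < n + 1), zero_add,
    Finset.Ico_add_one_right_eq_Icc] at h
  have hterm : (fun k : ℕ => 1 / ((k + (n + 1) : ℕ) : ℝ) ^ 2) =
      fun k : ℕ => 1 / (((n + k : ℕ) : ℝ) + 1) ^ 2 := funext fun k => by push_cast; ring
  rw [hterm] at h
  simpa using h

theorem one_div_sq_sub_one_div_mul_log_mem_Icc (n : ℕ) {x : ℝ} (hx0 : 0 < x) (hx1 : x ≤ 1) :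
    1 / ((n : ℝ) + 1) ^ 2 - 1 / ((n : ℝ) + 1) * log x ∈ Icc 0 (1 - log x) := by
  have hlogx : log x ≤ 0 := log_nonpos hx0.le hx1
  have ht : 1 / ((n : ℝ) + 1) ≤ 1 := by
    rw [div_le_one (by positivity)]; linarith [n.cast_nonneg (α := ℝ)]
  have ht0 : 0 < 1 / ((n : ℝ) + 1) := by positivity
  rw [← one_div_pow]
  constructor <;> nlinarith

theorem hasSum_integral_pow_mul_log_div (r s : ℕ) {x : ℝ} (hx : x ∈ Ioo (0:ℝ) 1) :
    HasSum (fun k : ℕ => x ^ (r + k) *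
        (1 / (((s + k : ℕ) : ℝ) + 1) ^ 2 - 1 / (((s + k : ℕ) : ℝ) + 1) * log x))
      (∫ y in (0:ℝ)..1, -(x ^ r * y ^ s * log (x * y) / (1 - x * y))) := by
  obtain ⟨hx0, hx1⟩ := hx
  have hint : ∀ k : ℕ, ∫ y in (0:ℝ)..1, x ^ (r + k) * (y ^ (s + k) * (-log x - log y)) =
      x ^ (r + k) * (1 / (((s + k : ℕ) : ℝ) + 1) ^ 2 - 1 / (((s + k : ℕ) : ℝ) + 1) * log x) := by
    intro k
    have h := integral_pow_mul_sub_mul_log (s + k) (-log x) 1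
    simp only [one_mul] at h
    rw [intervalIntegral.integral_const_mul, h]
    ring
  have h := hasSum_intervalIntegral_of_nonneg zero_le_one
    (f := fun k y => x ^ (r + k) * (y ^ (s + k) * (-log x - log y)))
    (F := fun y => -(x ^ r * y ^ s * log (x * y) / (1 - x * y)))
    (fun k => by
      simpa using (intervalIntegrable_pow_mul_sub_mul_log (s + k) (-log x) 1).const_mul _)
    (fun k y hy => by
      have := log_nonpos hy.1.le hy.2.le
      have := log_nonpos hx0.le hx1.le
      exact mul_nonneg (pow_nonneg hx0.le _) (mul_nonneg (pow_nonneg hy.1.le _) (by linarith)))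
    (fun y hy => by
      convert hasSum_pow_add_mul_pow_add r s (x := x) (y := y) (by nlinarith [hy.1])
        (by nlinarith [hy.1, hy.2]) (-log x - log y) using 1
      rw [log_mul hx0.ne' hy.1.ne']
      ring)
    (by
      simp only [hint]
      exact summable_pow_add_mul_of_le r hx0.le hx1
        (fun k => (one_div_sq_sub_one_div_mul_log_mem_Icc _ hx0 hx1.le).1)
        (fun k => (one_div_sq_sub_one_div_mul_log_mem_Icc _ hx0 hx1.le).2))
  simpa only [hint] using h

theorem beukers_Jrs (r s : ℕ) (hrs : r ≠ s) :
    -(∫ x in (0:ℝ)..1, ∫ y in (0:ℝ)..1, x ^ r * y ^ s * Real.log (x * y) / (1 - x * y)) =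
      ((∑ k ∈ Finset.Icc 1 r, 1 / (k : ℝ) ^ 2) - ∑ k ∈ Finset.Icc 1 s, 1 / (k : ℝ) ^ 2) /
        ((r : ℝ) - (s : ℝ)) := by
  have hval : ∀ k : ℕ, ∫ x in (0:ℝ)..1, x ^ (r + k) *
        (1 / (((s + k : ℕ) : ℝ) + 1) ^ 2 - 1 / (((s + k : ℕ) : ℝ) + 1) * log x) =
      (1 / (((s + k : ℕ) : ℝ) + 1) ^ 2 - 1 / (((r + k : ℕ) : ℝ) + 1) ^ 2) / ((r : ℝ) - s) := by
    intro k
    rw [integral_pow_mul_inv_sq_sub_inv_mul_log (by omega)]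
    push_cast
    ring_nf
  have htel := ((hasSum_one_div_add_one_sq s).sub (hasSum_one_div_add_one_sq r)).div_const
    ((r : ℝ) - s)
  rw [sub_sub_sub_cancel_left] at htel
  have h := hasSum_intervalIntegral_of_nonneg zero_le_one
    (fun k => intervalIntegrable_pow_mul_sub_mul_log (r + k) _ _)
    (fun k x hx => mul_nonneg (pow_nonneg hx.1.le _)
      (one_div_sq_sub_one_div_mul_log_mem_Icc _ hx.1 hx.2.le).1)
    (fun x hx => hasSum_integral_pow_mul_log_div r s hx)
    (by simpa only [hval] using htel.summable)
  simp only [hval] at h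
  simp only [← intervalIntegral.integral_neg]
  exact h.unique htel
end

section
/- For all s, t ∈ (0,1), ∫₀¹ du/(1-(1-(1-s)t)u) = ∫₀¹ du/([1-(1-u)s][1-(1-t)u]), both equal to -ln((1-s)t)/(1-(1-s)t). -/
open Real Set intervalIntegral

lemma affine_pos_of_mem_Icc {b c u : ℝ} (hc : 0 < c) (hcb : 0 < c + b) (hu : u ∈ Icc (0:ℝ) 1) :
    0 < c + b * u := by
  obtain ⟨hu0, hu1⟩ := hu
  rcases le_or_gt 0 b with hb | hb <;> nlinarith

lemma hasDerivAt_log_affine {b c u : ℝ} (h : c + b * u ≠ 0) :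
    HasDerivAt (fun u => log (c + b * u)) (b / (c + b * u)) u := by
  simpa using (((hasDerivAt_id u).const_mul b).const_add c).log h

/-- Partial fractions: `1 / (p q) = (q' / q - p' / p) / (q' p - p' q)` for affine `p`, `q`. -/
lemma integral_one_div_mul_affine {b₁ c₁ b₂ c₂ : ℝ} (hc₁ : 0 < c₁) (hcb₁ : 0 < c₁ + b₁)
    (hc₂ : 0 < c₂) (hcb₂ : 0 < c₂ + b₂) (hD : b₂ * c₁ - b₁ * c₂ ≠ 0) :
    ∫ u in (0:ℝ)..1, 1 / ((c₁ + b₁ * u) * (c₂ + b₂ * u)) =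
      (log ((c₂ + b₂) / c₂) - log ((c₁ + b₁) / c₁)) / (b₂ * c₁ - b₁ * c₂) := by
  have hpos : ∀ u ∈ uIcc (0:ℝ) 1, 0 < c₁ + b₁ * u ∧ 0 < c₂ + b₂ * u := fun u hu => by
    rw [uIcc_of_le zero_le_one] at hu
    exact ⟨affine_pos_of_mem_Icc hc₁ hcb₁ hu, affine_pos_of_mem_Icc hc₂ hcb₂ hu⟩
  have hderiv : ∀ u ∈ uIcc (0:ℝ) 1, HasDerivAt
      (fun u => (log (c₂ + b₂ * u) - log (c₁ + b₁ * u)) / (b₂ * c₁ - b₁ * c₂))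
      (1 / ((c₁ + b₁ * u) * (c₂ + b₂ * u))) u := by
    intro u hu
    obtain ⟨hp, hq⟩ := hpos u hu
    refine (((hasDerivAt_log_affine hq.ne').sub (hasDerivAt_log_affine hp.ne')).div_const
      (b₂ * c₁ - b₁ * c₂)).congr_deriv ?_
    rw [div_sub_div _ _ hq.ne' hp.ne', div_div,
      div_eq_div_iff (mul_ne_zero (mul_ne_zero hq.ne' hp.ne') hD) (mul_pos hp hq).ne']
    ring
  have hint : IntervalIntegrable (fun u => 1 / ((c₁ + b₁ * u) * (c₂ + b₂ * u)))
      MeasureTheory.volume 0 1 :=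
    (continuousOn_const.div (by fun_prop) fun u hu =>
      (mul_pos (hpos u hu).1 (hpos u hu).2).ne').intervalIntegrable
  rw [integral_eq_sub_of_hasDerivAt hderiv hint, log_div hcb₂.ne' hc₂.ne',
    log_div hcb₁.ne' hc₁.ne']
  simp only [mul_one, mul_zero, add_zero]
  ring

theorem partial_fraction_integration (s t : ℝ) (hs : s ∈ Set.Ioo (0:ℝ) 1)
    (ht : t ∈ Set.Ioo (0:ℝ) 1) :
    (∫ u in (0:ℝ)..1, 1 / (1 - (1 - (1 - s) * t) * u)) =
        -Real.log ((1 - s) * t) / (1 - (1 - s) * t) ∧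
    (∫ u in (0:ℝ)..1, 1 / ((1 - (1 - u) * s) * (1 - (1 - t) * u))) =
        -Real.log ((1 - s) * t) / (1 - (1 - s) * t) := by
  obtain ⟨hs0, hs1⟩ := hs
  obtain ⟨ht0, ht1⟩ := ht
  have hst : 0 < (1 - s) * t := mul_pos (by linarith) ht0
  have hst1 : (1 - s) * t < 1 := by nlinarith
  constructor
  · convert integral_one_div_mul_affine (b₁ := 0) (c₁ := 1) (b₂ := -(1 - (1 - s) * t)) (c₂ := 1)
      one_pos (by simp) one_pos (by linarith) (by linarith) using 1
    · simp only [zero_mul, add_zero, one_mul, ← sub_eq_add_neg, neg_mul]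
    · rw [show (1:ℝ) + -(1 - (1 - s) * t) = (1 - s) * t by ring,
        show -(1 - (1 - s) * t) * 1 - 0 * 1 = -(1 - (1 - s) * t) by ring, div_neg, div_one,
        add_zero, div_one, log_one, sub_zero, neg_div]
  · convert integral_one_div_mul_affine (b₁ := s) (c₁ := 1 - s) (b₂ := -(1 - t)) (c₂ := 1)
      (by linarith) (by linarith) one_pos (by linarith) (by nlinarith) using 1
    · congr 1; funext u; ring
    · rw [show (1:ℝ) + -(1 - t) = t by ring, show 1 - s + s = 1 by ring,
        show -(1 - t) * (1 - s) - s * 1 = -(1 - (1 - s) * t) by ring, div_neg, div_one, one_div,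
        log_inv, log_mul (by linarith) (by linarith)]
      ring
end

section
/- The function g(x,y,z) = x(1-x)y(1-y)z(1-z)/([1-(1-z)x](1-yz)) on [0,1)³ attains its maximum value 17 - 12√2 at the point (2-√2, 2-√2, 1/2); in particular g(x,y,z) ≤ 17 - 12√2 for all (x,y,z) ∈ [0,1)³. -/
/-!
Write `z = t²` and `1 - z = u²` with `t, u ≥ 0`. For every `x`,
`1 - u² x - x(1 - x)(1 + t)² = (1 - (1 + t)x)² ≥ 0`, and symmetrically for `y`, so the
denominator is at least `x(1-x)(1+t)² · y(1-y)(1+u)²` and it suffices to bound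
`tu / ((1+t)(1+u))` by `3 - 2√2` on the quarter circle `t² + u² = 1`. There `t + u ≤ √2`, and
`(3 - 2√2)(1+t)(1+u) - tu = (√2 - 1)(1 + t + u)(√2 - t - u)`. Squaring gives the constant
`(3 - 2√2)² = 17 - 12√2`; equality holds at `t = u = 1/√2`, `x = y = 1/(1+t) = 2 - √2`.
-/

open Real

lemma three_sub_two_mul_sqrt_two_sq : (3 - 2 * √2) ^ 2 = 17 - 12 * √2 := by
  linear_combination 4 * sq_sqrt (show (0 : ℝ) ≤ 2 by norm_num)

lemma mul_one_sub_mul_one_add_sq_le (x t : ℝ) :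
    x * (1 - x) * (1 + t) ^ 2 ≤ 1 - (1 - t ^ 2) * x := by
  nlinarith [sq_nonneg (1 - (1 + t) * x)]

lemma add_le_sqrt_two_of_sq_add_sq_eq_one {t u : ℝ} (h : t ^ 2 + u ^ 2 = 1) :
    t + u ≤ √2 := by
  apply le_sqrt_of_sq_le
  nlinarith [sq_nonneg (t - u)]

lemma mul_le_three_sub_two_mul_sqrt_two_mul {t u : ℝ} (ht : 0 ≤ t) (hu : 0 ≤ u)
    (h : t ^ 2 + u ^ 2 = 1) : t * u ≤ (3 - 2 * √2) * ((1 + t) * (1 + u)) := by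
  have hs : √2 ^ 2 = 2 := sq_sqrt (by norm_num)
  have hs1 : 1 ≤ √2 := one_le_sqrt.mpr (by norm_num)
  have hsum := add_le_sqrt_two_of_sq_add_sq_eq_one h
  have hfactor : (3 - 2 * √2) * ((1 + t) * (1 + u)) - t * u
      = (1 + t + u) * ((√2 - 1) * (√2 - (t + u))) := by
    linear_combination (-(1 + t + u)) * hs + (√2 - 1) * h
  have : 0 ≤ (1 + t + u) * ((√2 - 1) * (√2 - (t + u))) := by
    apply mul_nonneg (by linarith) (mul_nonneg (by linarith) (by linarith))
  linarith

lemma sq_mul_sq_le_of_sq_add_sq_eq_one {t u : ℝ} (ht : 0 ≤ t) (hu : 0 ≤ u)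
    (h : t ^ 2 + u ^ 2 = 1) : t ^ 2 * u ^ 2 ≤ (17 - 12 * √2) * ((1 + t) * (1 + u)) ^ 2 := by
  rw [← three_sub_two_mul_sqrt_two_sq, ← mul_pow, ← mul_pow]
  exact pow_le_pow_left₀ (mul_nonneg ht hu) (mul_le_three_sub_two_mul_sqrt_two_mul ht hu h) 2

lemma numerator_le_mul_denominator {x y z : ℝ} (hx : x ∈ Set.Icc (0 : ℝ) 1)
    (hy : y ∈ Set.Icc (0 : ℝ) 1) (hz : z ∈ Set.Icc (0 : ℝ) 1) :
    x * (1 - x) * y * (1 - y) * z * (1 - z)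
      ≤ (17 - 12 * √2) * ((1 - (1 - z) * x) * (1 - y * z)) := by
  obtain ⟨hx0, hx1⟩ := hx
  obtain ⟨hy0, hy1⟩ := hy
  obtain ⟨hz0, hz1⟩ := hz
  set t := √z
  set u := √(1 - z)
  have ht : t ^ 2 = z := sq_sqrt hz0
  have hu : u ^ 2 = 1 - z := sq_sqrt (by linarith)
  have hxt : x * (1 - x) * (1 + t) ^ 2 ≤ 1 - (1 - z) * x := by
    simpa [ht] using mul_one_sub_mul_one_add_sq_le x t
  have hyu : y * (1 - y) * (1 + u) ^ 2 ≤ 1 - y * z := by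
    simpa [hu, mul_comm] using mul_one_sub_mul_one_add_sq_le y u
  have hA : 0 ≤ x * (1 - x) := mul_nonneg hx0 (by linarith)
  have hB : 0 ≤ y * (1 - y) := mul_nonneg hy0 (by linarith)
  calc x * (1 - x) * y * (1 - y) * z * (1 - z)
      = x * (1 - x) * (y * (1 - y)) * (t ^ 2 * u ^ 2) := by rw [ht, hu]; ring
    _ ≤ x * (1 - x) * (y * (1 - y)) * ((17 - 12 * √2) * ((1 + t) * (1 + u)) ^ 2) :=
        mul_le_mul_of_nonneg_left
          (sq_mul_sq_le_of_sq_add_sq_eq_one (sqrt_nonneg _) (sqrt_nonneg _) (by rw [ht, hu]; ring))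
          (mul_nonneg hA hB)
    _ = (17 - 12 * √2) * ((x * (1 - x) * (1 + t) ^ 2) * (y * (1 - y) * (1 + u) ^ 2)) := by ring
    _ ≤ (17 - 12 * √2) * ((1 - (1 - z) * x) * (1 - y * z)) := by
        rw [← three_sub_two_mul_sqrt_two_sq]
        gcongr
        exact (mul_nonneg hA (sq_nonneg _)).trans hxt

theorem max_g_unit_cube :
    ((2 - Real.sqrt 2) * (1 - (2 - Real.sqrt 2)) * (2 - Real.sqrt 2) *
        (1 - (2 - Real.sqrt 2)) * (1 / 2 : ℝ) * (1 - 1 / 2) /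
        ((1 - (1 - 1 / 2) * (2 - Real.sqrt 2)) * (1 - (2 - Real.sqrt 2) * (1 / 2)))
      = 17 - 12 * Real.sqrt 2) ∧
    ∀ x ∈ Set.Ico (0:ℝ) 1, ∀ y ∈ Set.Ico (0:ℝ) 1, ∀ z ∈ Set.Ico (0:ℝ) 1,
      x * (1 - x) * y * (1 - y) * z * (1 - z) /
          ((1 - (1 - z) * x) * (1 - y * z)) ≤ 17 - 12 * Real.sqrt 2 := by
  constructor
  · have hs : √2 ^ 2 = 2 := sq_sqrt (by norm_num)
    have hden : (1 - (1 - 1 / 2 : ℝ) * (2 - √2)) * (1 - (2 - √2) * (1 / 2)) = 1 / 2 := by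
      linear_combination (1 / 4) * hs
    rw [hden, div_eq_iff (by norm_num)]
    linear_combination ((√2 ^ 2 - 6 * √2 + 15) / 4) * hs
  · rintro x ⟨hx0, hx1⟩ y ⟨hy0, hy1⟩ z ⟨hz0, hz1⟩
    have hD1 : 0 < 1 - (1 - z) * x := by nlinarith
    have hD2 : 0 < 1 - y * z := by nlinarith
    rw [div_le_iff₀ (mul_pos hD1 hD2)]
    exact numerator_le_mul_denominator ⟨hx0, hx1.le⟩ ⟨hy0, hy1.le⟩ ⟨hz0, hz1.le⟩
end
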